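/- arXiv:1509.08351 — 2 statements merged into one kernel-verified Lean document; each statement's English description precedes it below -/
import Mathlib

section
/- For every integer m ≥ 1, the polynomial P_m(q,t,a) = (1−t)·∑_{i=0}^{m−1}(qt)^i + (qt)^m + a·((1−t)·q·∑_{i=0}^{m−2}(qt)^i + q^m t^{m−1}) in ℤ[q^{±1}, t^{±1}, a] satisfies the self-duality (qt)^m · P_m(t^{-1}, q^{-1}, a) = P_m(q, t, a). -/
open Finset

/-- The reduced DAHA-superpolynomial of the 2-fold torus link `T(m,1)`. -/
def Pm {R : Type*} [CommRing R] (q t a : R) (m : ℕ) : R :=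
  (1 - t) * ∑ i ∈ Finset.range m, (q * t) ^ i + (q * t) ^ m +
    a * ((1 - t) * q * ∑ i ∈ Finset.range (m - 1), (q * t) ^ i + q ^ m * t ^ (m - 1))

lemma key_unit {R : Type*} [CommRing R] (q t : Rˣ) :
    ((q : R) * t) * (((t⁻¹ : Rˣ) : R) * ((q⁻¹ : Rˣ) : R)) = 1 := by
  have h1 : (q : R) * ((q⁻¹ : Rˣ) : R) = 1 := q.mul_inv
  have h2 : (t : R) * ((t⁻¹ : Rˣ) : R) = 1 := t.mul_inv
  calc ((q : R) * t) * (((t⁻¹ : Rˣ) : R) * ((q⁻¹ : Rˣ) : R))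
      = ((t : R) * ((t⁻¹ : Rˣ) : R)) * ((q : R) * ((q⁻¹ : Rˣ) : R)) := by ring
    _ = 1 := by rw [h1, h2, one_mul]

lemma aux_sum {R : Type*} [CommRing R] (q t : Rˣ) (n : ℕ) :
    ((q : R) * t) ^ n * ∑ i ∈ Finset.range n, (((t⁻¹ : Rˣ) : R) * ((q⁻¹ : Rˣ) : R)) ^ i
      = (q : R) * t * ∑ i ∈ Finset.range n, ((q : R) * t) ^ i := by
  rw [Finset.mul_sum, Finset.mul_sum,
    ← Finset.sum_range_reflect (fun i => (q : R) * t * ((q : R) * t) ^ i) n]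
  refine Finset.sum_congr rfl fun i hi => ?_
  rw [Finset.mem_range] at hi
  have e : n = (n - 1 - i) + 1 + i := by omega
  calc ((q : R) * t) ^ n * (((t⁻¹ : Rˣ) : R) * ((q⁻¹ : Rˣ) : R)) ^ i
      = ((q : R) * t) * ((q : R) * t) ^ (n - 1 - i) *
          (((q : R) * t) ^ i * (((t⁻¹ : Rˣ) : R) * ((q⁻¹ : Rˣ) : R)) ^ i) := by
        rw [show ((q : R) * t) ^ n = ((q : R) * t) ^ ((n - 1 - i) + 1 + i) from by rw [← e]]
        ring
    _ = (q : R) * t * ((q : R) * t) ^ (n - 1 - i) := by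
        rw [← mul_pow, key_unit, one_pow, mul_one]

/-- Self-duality `(qt)^m · P_m(t⁻¹, q⁻¹, a) = P_m(q, t, a)`. -/
theorem stmt0 {R : Type*} [CommRing R] (q t : Rˣ) (a : R) (m : ℕ) (hm : 1 ≤ m) :
    ((q : R) * t) ^ m * Pm ((t⁻¹ : Rˣ) : R) ((q⁻¹ : Rˣ) : R) a m = Pm (q : R) (t : R) a m := by
  obtain ⟨k, rfl⟩ : ∃ k, m = k + 1 := ⟨m - 1, by omega⟩
  set x : R := ((t⁻¹ : Rˣ) : R) with hxdef
  set y : R := ((q⁻¹ : Rˣ) : R) with hydef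
  have hy : (q : R) * y = 1 := q.mul_inv
  have hx : (t : R) * x = 1 := t.mul_inv
  have h1 : ((q : R) * t) ^ (k + 1) * ∑ i ∈ Finset.range (k + 1), (x * y) ^ i
      = (q : R) * t * ∑ i ∈ Finset.range (k + 1), ((q : R) * t) ^ i := aux_sum q t (k + 1)
  have h2 : ((q : R) * t) ^ k * ∑ i ∈ Finset.range k, (x * y) ^ i
      = (q : R) * t * ∑ i ∈ Finset.range k, ((q : R) * t) ^ i := aux_sum q t k
  have h3 : ((q : R) * t) ^ (k + 1) * (x * y) ^ (k + 1) = 1 := by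
    rw [← mul_pow, key_unit, one_pow]
  have hq2 : (q : R) ^ k * y ^ k = 1 := by rw [← mul_pow, hy, one_pow]
  have ht2 : (t : R) ^ (k + 1) * x ^ (k + 1) = 1 := by rw [← mul_pow, hx, one_pow]
  have h4 : ((q : R) * t) ^ (k + 1) * (x ^ (k + 1) * y ^ k) = (q : R) := by
    linear_combination ((q : R) * ((q : R) ^ k * y ^ k)) * ht2 + (q : R) * hq2
  have g1 : (∑ i ∈ Finset.range (k + 1), ((q : R) * t) ^ i) * ((q : R) * t - 1)
      = ((q : R) * t) ^ (k + 1) - 1 := geom_sum_mul _ _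
  have g2 : (∑ i ∈ Finset.range k, ((q : R) * t) ^ i) * ((q : R) * t - 1)
      = ((q : R) * t) ^ k - 1 := geom_sum_mul _ _
  simp only [Pm, Nat.add_sub_cancel]
  set S : R := ∑ i ∈ Finset.range (k + 1), ((q : R) * t) ^ i with hS
  set S' : R := ∑ i ∈ Finset.range k, ((q : R) * t) ^ i with hS'
  linear_combination (1 - y) * h1 + (a * (1 - y) * x * (q : R) * t) * h2 + h3 + a * h4
    + g1 + a * (q : R) * g2
    + (a * (q : R) ^ 2 * t * S' - a * (q : R) ^ 2 * t * S' * y) * hx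
    + (-(t * S) - a * (q : R) * t * S') * hy
end

section
/- For every n ≥ 1, the identity ∏_{1 ≤ l < m ≤ n+1} (1 − t^{m−l+1}) · (1 − t)^n = ∏_{1 ≤ l < m ≤ n+1} (1 − t^{m−l}) · ∏_{i=2}^{n+1} (1 − t^i) holds in ℤ[t]. Equivalently, ∏_{α ∈ R₊}(1 − t^{1+ht(α)})/(1 − t^{ht(α)}) = ∏_{i=1}^{n}(1 − t^{i+1})/(1 − t) for the root system A_n, where ht(ε_l − ε_m) = m − l. -/
/-!
Group the positive roots `ε_l − ε_m` by `l`: with `k = n + 1 − l`, the row contributes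
`∏_{i=1}^{k} (1 − t^{i+1})` on the left and `∏_{i=1}^{k} (1 − t^i)` on the right. One factor
`1 − t` turns a left row into `∏_{i=1}^{k+1} (1 − t^i)`, which is the right row times
`1 − t^{k+1}`; over the `n` nonempty rows `k = 1, …, n` this trades `(1 − t)^n` for
`∏_{i=2}^{n+1} (1 − t^i)`. This holds in any commutative monoid, with `f i = 1 − t^i`.
-/

open Finset

section
variable {M : Type*} [CommMonoid M]

theorem prod_Ioc_sub_eq_prod_range (g : ℕ → M) (l N : ℕ) :
    ∏ m ∈ Ioc l N, g (m - l) = ∏ i ∈ range (N - l), g (i + 1) := by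
  rw [← Ico_add_one_add_one_eq_Ioc, prod_Ico_eq_prod_range]
  exact prod_congr (by congr 1; omega) fun i _ => congr_arg g (by omega)

theorem prod_Icc_one_reflect (F : ℕ → M) (N : ℕ) :
    ∏ l ∈ Icc 1 N, F (N - l) = ∏ k ∈ range N, F k := by
  rw [← Ico_add_one_right_eq_Icc, prod_Ico_reflect F 1 le_rfl, Nat.sub_self,
    add_tsub_cancel_right, Nat.Ico_zero_eq_range]

theorem prod_Icc_two_eq_prod_range (f : ℕ → M) (n : ℕ) :
    ∏ i ∈ Icc 2 (n + 1), f i = ∏ i ∈ range n, f (i + 2) := by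
  rw [← Ico_add_one_right_eq_Icc, prod_Ico_eq_prod_range]
  exact prod_congr (by congr 1) fun i _ => congr_arg f (add_comm 2 i)

theorem prod_range_add_two_mul (f : ℕ → M) (k : ℕ) :
    (∏ i ∈ range k, f (i + 2)) * f 1 = (∏ i ∈ range k, f (i + 1)) * f (k + 1) := by
  rw [← prod_range_succ, ← prod_range_succ' (fun i => f (i + 1))]

theorem prod_range_prod_range_add_two_mul_pow (f : ℕ → M) (n : ℕ) :
    (∏ k ∈ range (n + 1), ∏ i ∈ range k, f (i + 2)) * f 1 ^ n =
      (∏ k ∈ range (n + 1), ∏ i ∈ range k, f (i + 1)) * ∏ k ∈ range n, f (k + 2) := by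
  simp only [prod_range_succ' _ n, range_zero, prod_empty, mul_one]
  have rows := prod_congr rfl fun k (_ : k ∈ range n) => prod_range_add_two_mul f (k + 1)
  rwa [prod_mul_distrib, prod_mul_distrib, prod_const, card_range] at rows

end

theorem stmt14_general {R : Type*} [CommRing R] (t : R) (n : ℕ) :
    (∏ l ∈ Finset.Icc 1 (n + 1), ∏ m ∈ Finset.Ioc l (n + 1), (1 - t ^ (m - l + 1))) *
        (1 - t) ^ n =
      (∏ l ∈ Finset.Icc 1 (n + 1), ∏ m ∈ Finset.Ioc l (n + 1), (1 - t ^ (m - l))) *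
        ∏ i ∈ Finset.Icc 2 (n + 1), (1 - t ^ i) := by
  simp only [prod_Ioc_sub_eq_prod_range (fun h => 1 - t ^ (h + 1)),
    prod_Ioc_sub_eq_prod_range (fun h => 1 - t ^ h),
    prod_Icc_one_reflect (fun k => ∏ i ∈ range k, (1 - t ^ (i + 1 + 1))),
    prod_Icc_one_reflect (fun k => ∏ i ∈ range k, (1 - t ^ (i + 1))),
    prod_Icc_two_eq_prod_range (fun i => 1 - t ^ i)]
  simpa only [add_assoc, pow_one] using prod_range_prod_range_add_two_mul_pow (fun i => 1 - t ^ i) n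

/-- Poincaré polynomial identity for `A_n`:
`∏_{1≤l<m≤n+1} (1 − t^{m−l+1}) · (1−t)^n = ∏_{1≤l<m≤n+1} (1 − t^{m−l}) · ∏_{i=2}^{n+1} (1 − t^i)`. -/
theorem stmt14 {R : Type*} [CommRing R] (t : R) (n : ℕ) (hn : 1 ≤ n) :
    (∏ l ∈ Finset.Icc 1 (n + 1), ∏ m ∈ Finset.Ioc l (n + 1), (1 - t ^ (m - l + 1))) *
        (1 - t) ^ n =
      (∏ l ∈ Finset.Icc 1 (n + 1), ∏ m ∈ Finset.Ioc l (n + 1), (1 - t ^ (m - l))) *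
        ∏ i ∈ Finset.Icc 2 (n + 1), (1 - t ^ i) :=
  stmt14_general t n
end
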